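/- arXiv:1811.03914 — 6 statements merged into one kernel-verified Lean document; each statement's English description precedes it below -/
import Mathlib

section
/- Let v1 ≥ 2 and v3 ≥ 1 be integers and let S be the multiset over the integers consisting of v1 copies of 1 and v3 copies of 3. Then the set of sums of nonempty sub-multisets of S equals the integer interval [1, v1 + 3*v3]. -/
theorem stmt_1 (v1 v3 : ℕ) (h1 : 2 ≤ v1) (h3 : 1 ≤ v3) :
    {x : ℤ | ∃ T : Multiset ℤ,
        T ≤ Multiset.replicate v1 (1 : ℤ) + Multiset.replicate v3 (3 : ℤ) ∧
        T ≠ 0 ∧ T.sum = x} =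
      Set.Icc (1 : ℤ) ((v1 : ℤ) + 3 * v3) := by
  ext x
  simp only [Set.mem_setOf_eq, Set.mem_Icc]
  constructor
  · rintro ⟨T, hle, hne, rfl⟩
    obtain ⟨V, hV⟩ := Multiset.le_iff_exists_add.mp hle
    have hmem : ∀ t : ℤ, t ∈ Multiset.replicate v1 (1 : ℤ) + Multiset.replicate v3 (3 : ℤ) →
        t = 1 ∨ t = 3 := by
      intro t ht
      rcases Multiset.mem_add.mp ht with h | h
      · exact Or.inl (Multiset.eq_of_mem_replicate h)
      · exact Or.inr (Multiset.eq_of_mem_replicate h)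
    have hTmem : ∀ t ∈ T, t = 1 ∨ t = 3 := fun t ht => hmem t (hV ▸ Multiset.mem_add.mpr (Or.inl ht))
    have hVmem : ∀ t ∈ V, t = 1 ∨ t = 3 := fun t ht => hmem t (hV ▸ Multiset.mem_add.mpr (Or.inr ht))
    constructor
    · obtain ⟨t, ht⟩ := Multiset.exists_mem_of_ne_zero hne
      have h1t : 1 ≤ t := by rcases hTmem t ht with h | h <;> omega
      have := Multiset.single_le_sum (fun y hy => by rcases hTmem y hy with h | h <;> omega) t ht
      omega
    · have hsum : T.sum + V.sum = (v1 : ℤ) + 3 * v3 := by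
        have : (Multiset.replicate v1 (1 : ℤ) + Multiset.replicate v3 (3 : ℤ)).sum
            = (v1 : ℤ) + 3 * v3 := by
          simp [Multiset.sum_replicate]; ring
        rw [← this, hV, Multiset.sum_add]
      have hVnn : 0 ≤ V.sum :=
        Multiset.sum_nonneg (fun y hy => by rcases hVmem y hy with h | h <;> omega)
      omega
  · rintro ⟨hx1, hx2⟩
    set n := x.toNat with hn
    have hxn : (n : ℤ) = x := Int.toNat_of_nonneg (by omega)
    have hn1 : 1 ≤ n := by omega
    have hn2 : n ≤ v1 + 3 * v3 := by omega
    set b : ℕ := if n ≤ v1 then 0 else (n - v1 + 2) / 3 with hb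
    set a : ℕ := n - 3 * b with ha
    have hab : a ≤ v1 ∧ b ≤ v3 ∧ a + 3 * b = n ∧ 1 ≤ a + b := by
      rcases le_or_gt n v1 with h | h
      · simp only [hb, if_pos h, ha]; omega
      · simp only [hb, if_neg (not_le.mpr h), ha]; omega
    obtain ⟨ha1, hb1, hsum, hpos⟩ := hab
    refine ⟨Multiset.replicate a (1 : ℤ) + Multiset.replicate b (3 : ℤ), ?_, ?_, ?_⟩
    · exact add_le_add ((Multiset.replicate_le_replicate _).mpr ha1)
        ((Multiset.replicate_le_replicate _).mpr hb1)
    · intro h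
      have := congrArg Multiset.card h
      simp at this
      omega
    · simp [Multiset.sum_replicate]
      omega
end

section
/- The Davenport constant of the cyclic group ℤ/nℤ equals n − 1 for every n ≥ 2; that is, the maximal length of a zero-sum free multiset over ℤ/nℤ is n − 1. -/
theorem stmt_5 (n : ℕ) (hn : 2 ≤ n) :
    IsGreatest {k : ℕ | ∃ S : Multiset (ZMod n), Multiset.card S = k ∧
      ∀ T : Multiset (ZMod n), T ≤ S → T ≠ 0 → T.sum ≠ 0} (n - 1) := by
  have hn0 : NeZero n := ⟨by omega⟩
  constructor
  · refine ⟨Multiset.replicate (n - 1) (1 : ZMod n), by simp, ?_⟩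
    intro T hT hT0
    have hall : ∀ x ∈ T, x = (1 : ZMod n) := fun x hx =>
      Multiset.eq_of_mem_replicate (Multiset.mem_of_le hT hx)
    have hTr : T = Multiset.replicate (Multiset.card T) 1 :=
      Multiset.eq_replicate_card.2 hall
    have hle : Multiset.card T ≤ n - 1 := by
      have := Multiset.card_le_card hT
      simpa using this
    have hpos : 0 < Multiset.card T := Multiset.card_pos.2 hT0
    rw [hTr, Multiset.sum_replicate, nsmul_eq_mul, mul_one]
    intro h
    rw [ZMod.natCast_eq_zero_iff] at h
    have := Nat.le_of_dvd hpos h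
    omega
  · rintro k ⟨S, hcard, hzs⟩
    by_contra h
    push_neg at h
    set L := S.toList with hL
    have hLS : (L : Multiset (ZMod n)) = S := S.coe_toList
    have hlen : L.length = k := by
      rw [← hcard, ← hLS]; simp
    have hmap : ∀ i ∈ Finset.Icc 1 k,
        (L.take i).sum ∈ Finset.univ.erase (0 : ZMod n) := by
      intro i hi
      simp only [Finset.mem_Icc] at hi
      simp only [Finset.mem_erase, Finset.mem_univ, and_true]
      have hsub : ((L.take i : List (ZMod n)) : Multiset (ZMod n)) ≤ S := by
        rw [← hLS]
        exact (L.take_sublist i).subperm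
      have hne : ((L.take i : List (ZMod n)) : Multiset (ZMod n)) ≠ 0 := by
        rw [Ne, Multiset.coe_eq_zero, ← List.length_eq_zero_iff, List.length_take]
        omega
      have := hzs _ hsub hne
      simpa using this
    have hcards : (Finset.univ.erase (0 : ZMod n)).card < (Finset.Icc 1 k).card := by
      rw [Finset.card_erase_of_mem (Finset.mem_univ _), Finset.card_univ,
        ZMod.card, Nat.card_Icc]
      omega
    obtain ⟨i, hi, j, hj, hij, heq⟩ :=
      Finset.exists_ne_map_eq_of_card_lt_of_maps_to hcards hmap
    simp only [Finset.mem_Icc] at hi hj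
    wlog hlt : i < j generalizing i j
    · exact this j i hij.symm heq.symm hj hi (by omega)
    -- the segment between i and j sums to zero
    set seg := (L.drop i).take (j - i) with hseg
    have htake : L.take j = L.take i ++ seg := by
      have : j = i + (j - i) := by omega
      rw [this, List.take_add]
    have hsum : seg.sum = 0 := by
      rw [htake, List.sum_append] at heq
      exact (left_eq_add.mp heq)
    have hsub : ((seg : List (ZMod n)) : Multiset (ZMod n)) ≤ S := by
      rw [← hLS]
      exact (((L.drop i).take_sublist (j - i)).trans (L.drop_sublist i)).subperm
    have hlseg : seg.length = j - i := by
      rw [hseg, List.length_take, List.length_drop]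
      omega
    have hne : ((seg : List (ZMod n)) : Multiset (ZMod n)) ≠ 0 := by
      rw [Ne, Multiset.coe_eq_zero, ← List.length_eq_zero_iff, hlseg]
      omega
    exact hzs _ hsub hne (by simpa using hsum)
end

section
/- Let n, k be positive integers with n ≥ 2k + 1 ≥ 3, and let S = a_1 • ... • a_{n−k} be a zero-sum free sequence over ℤ/nℤ such that Σ_{i=1}^{n−k} \bar{a_i} ≤ n − 1, where \bar{a} denotes the least positive residue of a modulo n. Then the set of values Σ_{i∈Λ} \bar{a_i}, taken over all nonempty subsets Λ ⊆ {1,...,n−k}, equals the integer interval [1, Σ_{i=1}^{n−k} \bar{a_i}]. -/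
/-- The least positive integer in the congruence class `a` modulo `n`. -/
def leastPosRes (n : ℕ) (a : ZMod n) : ℕ := if a = 0 then n else a.val

lemma card_le_sum_aux {ι : Type*} (s : Finset ι) (b : ι → ℕ)
    (h : ∀ i ∈ s, 1 ≤ b i) : s.card ≤ ∑ i ∈ s, b i := by
  calc s.card = s.card • 1 := by simp
  _ ≤ ∑ i ∈ s, b i := Finset.card_nsmul_le_sum s b 1 h

lemma fill_lemma {ι : Type*} [DecidableEq ι] (s : Finset ι) (b : ι → ℕ)
    (h1 : ∀ i ∈ s, 1 ≤ b i)
    (h2 : ∀ i ∈ s, b i ≤ (s.filter fun j => b j < b i).card + 1) :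
    ∀ t, 1 ≤ t → t ≤ ∑ i ∈ s, b i →
      ∃ Λ, Λ ⊆ s ∧ Λ.Nonempty ∧ ∑ i ∈ Λ, b i = t := by
  induction s using Finset.strongInduction with
  | _ s ih =>
  intro t ht1 ht2
  have hsne : s.Nonempty := by
    rcases s.eq_empty_or_nonempty with h | h
    · subst h; simp at ht2; omega
    · exact h
  obtain ⟨i0, hi0s, hi0max⟩ := s.exists_max_image b hsne
  set s' := s.erase i0 with hs'
  have hss' : s' ⊂ s := Finset.erase_ssubset hi0s
  have hsumsplit : ∑ i ∈ s, b i = b i0 + ∑ i ∈ s', b i := (Finset.add_sum_erase s b hi0s).symm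
  have h1' : ∀ i ∈ s', 1 ≤ b i := fun i hi => h1 i (Finset.mem_of_mem_erase hi)
  have h2' : ∀ i ∈ s', b i ≤ (s'.filter fun j => b j < b i).card + 1 := by
    intro i hi
    have heq : (s'.filter fun j => b j < b i) = s.filter fun j => b j < b i := by
      rw [hs', Finset.filter_erase]
      apply Finset.erase_eq_of_notMem
      simp only [Finset.mem_filter]
      rintro ⟨-, hlt⟩
      exact absurd (hi0max i (Finset.mem_of_mem_erase hi)) (by omega)
    rw [heq]
    exact h2 i (Finset.mem_of_mem_erase hi)
  -- the maximum is at most (sum of the rest) + 1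
  have hMle : b i0 ≤ (∑ i ∈ s', b i) + 1 := by
    have hf : (s.filter fun j => b j < b i0) ⊆ s' := by
      intro j hj
      simp only [Finset.mem_filter] at hj
      exact Finset.mem_erase.mpr ⟨by rintro rfl; omega, hj.1⟩
    have hc1 : (s.filter fun j => b j < b i0).card ≤ ∑ i ∈ s.filter fun j => b j < b i0, b i :=
      card_le_sum_aux _ _ (fun i hi => h1 i (Finset.mem_of_mem_filter i hi))
    have hc2 : ∑ i ∈ s.filter fun j => b j < b i0, b i ≤ ∑ i ∈ s', b i :=
      Finset.sum_le_sum_of_subset hf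
    have := h2 i0 hi0s
    omega
  by_cases hcase : t ≤ ∑ i ∈ s', b i
  · obtain ⟨Λ, hΛ, hne, hsum⟩ := ih s' hss' h1' h2' t ht1 hcase
    exact ⟨Λ, hΛ.trans (Finset.erase_subset _ _), hne, hsum⟩
  · push_neg at hcase
    by_cases hM : t = b i0
    · refine ⟨{i0}, Finset.singleton_subset_iff.mpr hi0s, Finset.singleton_nonempty _, ?_⟩
      simp [hM]
    · have h1t : 1 ≤ t - b i0 := by omega
      have h2t : t - b i0 ≤ ∑ i ∈ s', b i := by omega
      obtain ⟨Λ, hΛ, hne, hsum⟩ := ih s' hss' h1' h2' (t - b i0) h1t h2t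
      have hi0Λ : i0 ∉ Λ := fun h => (Finset.mem_erase.mp (hΛ h)).1 rfl
      refine ⟨insert i0 Λ, ?_, Finset.insert_nonempty _ _, ?_⟩
      · exact Finset.insert_subset hi0s (hΛ.trans (Finset.erase_subset _ _))
      · rw [Finset.sum_insert hi0Λ, hsum]
        omega

theorem stmt_7 (n k : ℕ) (hk : 1 ≤ k) (hn : 2 * k + 1 ≤ n)
    (a : Fin (n - k) → ZMod n)
    (hzsf : ∀ Λ : Finset (Fin (n - k)), Λ.Nonempty → ∑ i ∈ Λ, a i ≠ 0)
    (hsum : ∑ i : Fin (n - k), leastPosRes n (a i) ≤ n - 1) :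
    {t : ℕ | ∃ Λ : Finset (Fin (n - k)), Λ.Nonempty ∧ ∑ i ∈ Λ, leastPosRes n (a i) = t} =
      Set.Icc 1 (∑ i : Fin (n - k), leastPosRes n (a i)) := by
  set b : Fin (n - k) → ℕ := fun i => leastPosRes n (a i) with hb
  have hsum' : ∑ i : Fin (n - k), b i ≤ n - 1 := hsum
  have hb1 : ∀ i, 1 ≤ b i := by
    intro i
    simp only [hb, leastPosRes]
    split
    · omega
    · next h =>
      have : (a i).val ≠ 0 := fun h0 => h ((ZMod.val_eq_zero _).mp h0)
      omega
  have hcard : (Finset.univ : Finset (Fin (n - k))).card = n - k := by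
    simp
  have hTm : n - k ≤ ∑ i : Fin (n - k), b i := by
    have := card_le_sum_aux Finset.univ b (fun i _ => hb1 i)
    omega
  -- key hypothesis for the fill lemma
  have h2 : ∀ i ∈ (Finset.univ : Finset (Fin (n - k))),
      b i ≤ ((Finset.univ : Finset (Fin (n - k))).filter fun j => b j < b i).card + 1 := by
    intro i _
    by_cases hv : b i ≤ 1
    · omega
    · push_neg at hv
      set A := (Finset.univ : Finset (Fin (n - k))).filter (fun j => 2 ≤ b j) with hA
      have hiA : i ∈ A := by
        simp only [hA, Finset.mem_filter]
        exact ⟨Finset.mem_univ _, hv⟩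
      have hsplit : ∑ j ∈ A, b j + ∑ j ∈ Finset.univ.filter (fun j => ¬ 2 ≤ b j), b j
          = ∑ j : Fin (n - k), b j :=
        Finset.sum_filter_add_sum_filter_not Finset.univ _ b
      have hAsum : b i + 2 * (A.card - 1) ≤ ∑ j ∈ A, b j := by
        have he : b i + ∑ j ∈ A.erase i, b j = ∑ j ∈ A, b j := Finset.add_sum_erase A b hiA
        have h2e : (A.erase i).card • 2 ≤ ∑ j ∈ A.erase i, b j := by
          apply Finset.card_nsmul_le_sum
          intro j hj
          have := (Finset.mem_filter.mp (Finset.mem_of_mem_erase hj)).2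
          exact this
        have hce : (A.erase i).card = A.card - 1 := Finset.card_erase_of_mem hiA
        simp only [smul_eq_mul] at h2e
        omega
      have hnotAsum : (Finset.univ.filter (fun j => ¬ 2 ≤ b j)).card
          ≤ ∑ j ∈ Finset.univ.filter (fun j => ¬ 2 ≤ b j), b j :=
        card_le_sum_aux _ _ (fun j _ => hb1 j)
      have hcards : A.card + (Finset.univ.filter (fun j => ¬ 2 ≤ b j)).card = n - k := by
        have := Finset.card_filter_add_card_filter_not
          (s := (Finset.univ : Finset (Fin (n - k)))) (fun j => 2 ≤ b j)
        rw [hcard] at this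
        exact this
      have hsub : (Finset.univ.filter (fun j => ¬ 2 ≤ b j)).card
          ≤ (Finset.univ.filter (fun j => b j < b i)).card := by
        apply Finset.card_le_card
        intro j hj
        simp only [Finset.mem_filter] at hj ⊢
        exact ⟨hj.1, by omega⟩
      have hAcard : 1 ≤ A.card := Finset.card_pos.mpr ⟨i, hiA⟩
      omega
  ext t
  simp only [Set.mem_setOf_eq, Set.mem_Icc]
  constructor
  · rintro ⟨Λ, hne, rfl⟩
    constructor
    · exact le_trans (Finset.card_pos.mpr hne) (card_le_sum_aux Λ b (fun i _ => hb1 i))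
    · exact Finset.sum_le_sum_of_subset (Finset.subset_univ Λ)
  · rintro ⟨ht1, ht2⟩
    obtain ⟨Λ, -, hne, hΛsum⟩ :=
      fill_lemma Finset.univ b (fun i _ => hb1 i) h2 t ht1 ht2
    exact ⟨Λ, hne, hΛsum⟩
end

section
/- Let n, k be positive integers with n ≥ 2k + 1 ≥ 3, and let S = a_1 • ... • a_{n−k} be a zero-sum free sequence over ℤ/nℤ such that Σ_{i=1}^{n−k} \bar{a_i} ≤ n − 1. Then for every integer t with 1 ≤ t ≤ n − k there exists a nonempty subset Λ ⊆ {1,...,n−k} with Σ_{i∈Λ} \bar{a_i} = t. -/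
/-! The `n - k` residues `leastPosRes n (a i)` are positive integers with sum at most
`n - 1 < 2 (n - k)`, and any positive integers whose sum is less than twice their number attain
every value up to their number as a subset sum. -/

open Finset

lemma leastPosRes_pos (n : ℕ) [NeZero n] (a : ZMod n) : 0 < leastPosRes n a := by
  unfold leastPosRes
  split_ifs with ha
  · exact Nat.pos_of_neZero n
  · exact (ZMod.val_pos).2 ha

/- If some `b j ≥ 2`, removing `j` keeps the hypothesis, so the targets `t < #s` come from
`s.erase j`; the remaining target `#s` is `b j` plus one of them, as `b j ≤ #s` by the bound. -/
theorem Finset.exists_subset_sum_eq_of_sum_lt_two_mul_card {ι : Type*} [DecidableEq ι]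
    (b : ι → ℕ) (s : Finset ι) (hb : ∀ i ∈ s, 0 < b i) (hs : ∑ i ∈ s, b i < 2 * #s)
    {t : ℕ} (ht : t ≤ #s) : ∃ Λ ⊆ s, ∑ i ∈ Λ, b i = t := by
  induction s using Finset.strongInduction generalizing t with
  | _ s ih =>
  by_cases hone : ∀ i ∈ s, b i = 1
  · obtain ⟨Λ, hΛs, hΛcard⟩ := exists_subset_card_eq ht
    refine ⟨Λ, hΛs, ?_⟩
    rw [sum_congr rfl fun i hi => hone i (hΛs hi), sum_const, smul_eq_mul, mul_one, hΛcard]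
  push Not at hone
  obtain ⟨j, hj, hbj_ne⟩ := hone
  have hbj : 2 ≤ b j := by have := hb j hj; omega
  have hcard : #(s.erase j) + 1 = #s := card_erase_add_one hj
  have hsplit : ∑ i ∈ s.erase j, b i + b j = ∑ i ∈ s, b i := sum_erase_add s b hj
  have hcard_le : #(s.erase j) • 1 ≤ ∑ i ∈ s.erase j, b i :=
    card_nsmul_le_sum _ _ _ fun i hi => hb i (mem_of_mem_erase hi)
  rw [smul_eq_mul, mul_one] at hcard_le
  have ih' : ∀ {u}, u ≤ #(s.erase j) → ∃ Λ ⊆ s.erase j, ∑ i ∈ Λ, b i = u :=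
    ih _ (erase_ssubset hj) (fun i hi => hb i (mem_of_mem_erase hi)) (by omega)
  rcases le_or_gt t #(s.erase j) with hts | hts
  · obtain ⟨Λ, hΛ, hΛsum⟩ := ih' hts
    exact ⟨Λ, hΛ.trans (erase_subset j s), hΛsum⟩
  · obtain ⟨Λ, hΛ, hΛsum⟩ := ih' (u := t - b j) (by omega)
    refine ⟨insert j Λ, insert_subset hj (hΛ.trans (erase_subset j s)), ?_⟩
    rw [sum_insert fun hjΛ => (mem_erase.1 (hΛ hjΛ)).1 rfl, hΛsum]
    omega

theorem stmt_8_general (n k : ℕ) (hn : 2 * k + 1 ≤ n)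
    (a : Fin (n - k) → ZMod n)
    (hsum : ∑ i : Fin (n - k), leastPosRes n (a i) ≤ n - 1) :
    ∀ t : ℕ, 1 ≤ t → t ≤ n - k →
      ∃ Λ : Finset (Fin (n - k)), Λ.Nonempty ∧ ∑ i ∈ Λ, leastPosRes n (a i) = t := by
  intro t ht1 ht2
  have : NeZero n := ⟨by omega⟩
  have hcard : #(univ : Finset (Fin (n - k))) = n - k := card_fin _
  obtain ⟨Λ, -, hΛsum⟩ := exists_subset_sum_eq_of_sum_lt_two_mul_card
    (fun i => leastPosRes n (a i)) univ (fun i _ => leastPosRes_pos n (a i))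
    (by omega) (hcard ▸ ht2)
  refine ⟨Λ, nonempty_iff_ne_empty.2 fun hΛ => ?_, hΛsum⟩
  simp only [hΛ, sum_empty] at hΛsum
  omega

theorem stmt_8 (n k : ℕ) (hk : 1 ≤ k) (hn : 2 * k + 1 ≤ n)
    (a : Fin (n - k) → ZMod n)
    (hzsf : ∀ Λ : Finset (Fin (n - k)), Λ.Nonempty → ∑ i ∈ Λ, a i ≠ 0)
    (hsum : ∑ i : Fin (n - k), leastPosRes n (a i) ≤ n - 1) :
    ∀ t : ℕ, 1 ≤ t → t ≤ n - k →
      ∃ Λ : Finset (Fin (n - k)), Λ.Nonempty ∧ ∑ i ∈ Λ, leastPosRes n (a i) = t :=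
  stmt_8_general n k hn a hsum
end

section
/- Let n ≥ 3 and let D_{2n} = ⟨x, y | x² = yⁿ = 1, yx = xy⁻¹⟩ be the dihedral group of order 2n. The sequence over D_{2n} consisting of n−1 copies of y^t (where gcd(t,n) = 1) together with one element xy^s (0 ≤ s ≤ n−1) is product-one free and has length n. -/
/-!
Reflections have sign `-1` and rotations sign `1`, so a product equal to `1` contains an even
number of reflections; since the sequence has only one, a product-one subsequence would consist
of `k` copies of `r t` with `0 < k < n`, and `r t` has order `n` because `t` is coprime to `n`.
-/

namespace DihedralGroup

variable {n : ℕ}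

def sign : DihedralGroup n →* ℤˣ where
  toFun
    | r _ => 1
    | sr _ => -1
  map_one' := rfl
  map_mul' := by rintro (a | a) (b | b) <;> simp [r_mul_r, r_mul_sr, sr_mul_r, sr_mul_sr]

@[simp]
lemma sign_r (a : ZMod n) : sign (r a) = 1 := rfl

@[simp]
lemma sign_sr (a : ZMod n) : sign (sr a) = -1 := rfl

lemma sign_list_prod (l : List (DihedralGroup n)) :
    sign l.prod = ((l : Multiset (DihedralGroup n)).map sign).prod := by
  rw [map_list_prod, Multiset.map_coe, Multiset.prod_coe]

lemma orderOf_r_natCast [NeZero n] {t : ℕ} (ht : t.Coprime n) :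
    orderOf (r (t : ZMod n)) = n := by
  rw [orderOf_r, ZMod.val_natCast, Nat.gcd_comm, ← Nat.gcd_rec, Nat.gcd_comm, ht, Nat.div_one]

lemma list_prod_ne_one_of_le_replicate_r_add_sr {a b : ZMod n} {k : ℕ} (hk : k < orderOf (r a))
    {l : List (DihedralGroup n)} (hl : l ≠ [])
    (hle : (l : Multiset (DihedralGroup n)) ≤ Multiset.replicate k (r a) + {sr b}) :
    l.prod ≠ 1 := by
  rw [add_comm, Multiset.singleton_add] at hle
  by_cases hb : sr b ∈ l
  · obtain ⟨j, -, hj⟩ := Multiset.le_replicate_iff.1 <| by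
      simpa using Multiset.erase_le_erase (sr b) hle
    intro hprod
    have hsign := congrArg sign hprod
    rw [sign_list_prod, ← Multiset.cons_erase (Multiset.mem_coe.2 hb), Multiset.coe_erase,
      hj] at hsign
    simp at hsign
  · obtain ⟨j, hjk, hj⟩ :=
      Multiset.le_replicate_iff.1 ((Multiset.le_cons_of_notMem (by simpa)).1 hle)
    have hmem : ∀ x ∈ l, x = r a := fun x hx =>
      Multiset.eq_of_mem_replicate (hj ▸ Multiset.mem_coe.2 hx)
    have hlen : l.length = j := by simpa using congrArg Multiset.card hj
    rw [List.prod_eq_pow_card l (r a) hmem, hlen]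
    exact pow_ne_one_of_lt_orderOf (by rintro rfl; simp_all) (hjk.trans_lt hk)

end DihedralGroup

open DihedralGroup in
theorem stmt_13_general (n : ℕ) (hn : 3 ≤ n) (t : ℕ) (ht : Nat.gcd t n = 1)
    (s : ℕ) :
    Multiset.card
        (Multiset.replicate (n - 1) (r (t : ZMod n)) + {sr (s : ZMod n)}) = n ∧
    ∀ l : List (DihedralGroup n), l ≠ [] →
      (l : Multiset (DihedralGroup n)) ≤
        Multiset.replicate (n - 1) (r (t : ZMod n)) + {sr (s : ZMod n)} →
      l.prod ≠ 1 := by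
  have : NeZero n := ⟨by omega⟩
  refine ⟨?_, fun l hl hle => list_prod_ne_one_of_le_replicate_r_add_sr ?_ hl hle⟩
  · rw [Multiset.card_add, Multiset.card_replicate, Multiset.card_singleton]
    omega
  · rw [orderOf_r_natCast ht]
    omega

open DihedralGroup in
theorem stmt_13 (n : ℕ) (hn : 3 ≤ n) (t : ℕ) (ht : Nat.gcd t n = 1)
    (s : ℕ) (hs : s ≤ n - 1) :
    Multiset.card
        (Multiset.replicate (n - 1) (r (t : ZMod n)) + {sr (s : ZMod n)}) = n ∧
    ∀ l : List (DihedralGroup n), l ≠ [] →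
      (l : Multiset (DihedralGroup n)) ≤
        Multiset.replicate (n - 1) (r (t : ZMod n)) + {sr (s : ZMod n)} →
      l.prod ≠ 1 :=
  stmt_13_general n hn t ht s
end

section
/- Let n ≥ 3 and let D_{2n} be the dihedral group of order 2n. Every sequence over D_{2n} of length n + 1 has a nonempty subsequence whose terms can be ordered to have product equal to the identity; that is, the small Davenport constant d(D_{2n}) is at most n. -/
open Multiset

namespace Stmt16Aux

variable {n : ℕ}

/-- subset sums of a multiset over ZMod n -/
def sums (A : Multiset (ZMod n)) : Finset (ZMod n) :=
  (A.powerset.map Multiset.sum).toFinset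

lemma mem_sums {A : Multiset (ZMod n)} {c : ZMod n} :
    c ∈ sums A ↔ ∃ A', A' ≤ A ∧ A'.sum = c := by
  simp [sums, Multiset.mem_powerset, eq_comm]

lemma card_sums [NeZero n] (A : Multiset (ZMod n))
    (h : ∀ A' ≤ A, A' ≠ 0 → A'.sum ≠ 0) :
    Multiset.card A + 1 ≤ (sums A).card := by
  induction A using Multiset.induction with
  | empty =>
      have : (0 : ZMod n) ∈ sums (0 : Multiset (ZMod n)) := by
        rw [mem_sums]; exact ⟨0, le_refl _, rfl⟩
      simpa using Finset.card_pos.mpr ⟨0, this⟩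
  | cons a A ih =>
      have hA : ∀ A' ≤ A, A' ≠ 0 → A'.sum ≠ 0 :=
        fun A' hle => h A' (hle.trans (Multiset.le_cons_self A a))
      have hsub : sums A ⊆ sums (a ::ₘ A) := by
        intro c hc
        rw [mem_sums] at hc ⊢
        obtain ⟨A', hle, hs⟩ := hc
        exact ⟨A', hle.trans (Multiset.le_cons_self A a), hs⟩
      have hne : ¬ sums (a ::ₘ A) ⊆ sums A := by
        intro hcon
        have himg : (sums A).image (a + ·) ⊆ sums A := by
          intro x hx
          obtain ⟨c, hc, rfl⟩ := Finset.mem_image.mp hx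
          apply hcon
          rw [mem_sums] at hc ⊢
          obtain ⟨A', hle, hs⟩ := hc
          exact ⟨a ::ₘ A', Multiset.cons_le_cons a hle, by simp [hs]⟩
        have heq : (sums A).image (a + ·) = sums A :=
          Finset.eq_of_subset_of_card_le himg
            (le_of_eq (Finset.card_image_of_injective _ (add_right_injective a)).symm)
        have h0 : (0 : ZMod n) ∈ (sums A).image (a + ·) := by
          rw [heq, mem_sums]; exact ⟨0, Multiset.zero_le _, rfl⟩
        obtain ⟨c, hc, hac⟩ := Finset.mem_image.mp h0
        rw [mem_sums] at hc
        obtain ⟨A', hle, hs⟩ := hc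
        exact h (a ::ₘ A') (Multiset.cons_le_cons a hle) (Multiset.cons_ne_zero)
          (by simp [hs, hac])
      have : (sums A).card < (sums (a ::ₘ A)).card :=
        Finset.card_lt_card ⟨hsub, hne⟩
      have := ih hA
      simp only [Multiset.card_cons]
      omega

lemma key [NeZero n] (A B : Multiset (ZMod n))
    (hcard : Multiset.card A + Multiset.card B = n + 1) :
    (∃ A', A' ≤ A ∧ A' ≠ 0 ∧ A'.sum = 0) ∨
    (∃ a b A', a ∈ B ∧ b ∈ B.erase a ∧ A' ≤ A ∧ a + A'.sum = b) := by
  by_cases hz : ∃ A', A' ≤ A ∧ A' ≠ 0 ∧ A'.sum = 0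
  · exact Or.inl hz
  right
  have h : ∀ A' ≤ A, A' ≠ 0 → A'.sum ≠ 0 := by
    intro A' hle hne hs
    exact hz ⟨A', hle, hne, hs⟩
  have hcs := card_sums A h
  have hle : (sums A).card ≤ n := by
    have := Finset.card_le_univ (sums A)
    simpa [ZMod.card] using this
  have hB2 : 2 ≤ Multiset.card B := by omega
  by_cases hnd : B.Nodup
  · -- all reflection values distinct
    have hBpos : 0 < Multiset.card B := by omega
    obtain ⟨a₀, ha₀⟩ := Multiset.card_pos_iff_exists_mem.mp hBpos
    set X : Finset (ZMod n) := (sums A).image (a₀ + ·) with hX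
    set Y : Finset (ZMod n) := (B.erase a₀).toFinset with hY
    have hXcard : Multiset.card A + 1 ≤ X.card := by
      rw [hX, Finset.card_image_of_injective _ (add_right_injective a₀)]
      exact hcs
    have hYcard : Y.card = Multiset.card B - 1 := by
      rw [hY, Multiset.toFinset_card_of_nodup (hnd.erase a₀),
        Multiset.card_erase_of_mem ha₀]
      rfl
    have hunion : (X ∪ Y).card ≤ n := by
      have := Finset.card_le_univ (X ∪ Y)
      simpa [ZMod.card] using this
    have hinter : 0 < (X ∩ Y).card := by
      have := Finset.card_union_add_card_inter X Y
      omega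
    obtain ⟨b, hb⟩ := Finset.card_pos.mp hinter
    rw [Finset.mem_inter] at hb
    obtain ⟨hbX, hbY⟩ := hb
    obtain ⟨c, hc, hac⟩ := Finset.mem_image.mp hbX
    rw [mem_sums] at hc
    obtain ⟨A', hA'le, hA's⟩ := hc
    refine ⟨a₀, b, A', ha₀, ?_, hA'le, by rw [hA's]; exact hac⟩
    rw [hY] at hbY
    exact Multiset.mem_toFinset.mp hbY
  · -- repeated reflection
    rw [Multiset.nodup_iff_count_le_one] at hnd
    push_neg at hnd
    obtain ⟨a, ha⟩ := hnd
    have haB : a ∈ B := by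
      rw [← Multiset.count_pos]; omega
    have haE : a ∈ B.erase a := by
      rw [← Multiset.count_pos, Multiset.count_erase_self]; omega
    exact ⟨a, a, 0, haB, haE, Multiset.zero_le _, by simp⟩

/-- extract rotation exponents -/
def rotExp : DihedralGroup n → Option (ZMod n)
  | .r i => some i
  | .sr _ => none

def refExp : DihedralGroup n → Option (ZMod n)
  | .sr i => some i
  | .r _ => none

lemma decomp (S : Multiset (DihedralGroup n)) :
    (S.filterMap rotExp).map DihedralGroup.r
      + (S.filterMap refExp).map DihedralGroup.sr = S := by
  induction S using Multiset.induction with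
  | empty => simp
  | cons g S ih =>
      cases g with
      | r i =>
          rw [Multiset.filterMap_cons_some rotExp _ _ (rfl : rotExp (.r i) = some i),
            Multiset.filterMap_cons_none _ _ (rfl : refExp (.r i) = none),
            Multiset.map_cons, Multiset.cons_add, ih]
      | sr i =>
          rw [Multiset.filterMap_cons_none _ _ (rfl : rotExp (.sr i) = none),
            Multiset.filterMap_cons_some refExp _ _ (rfl : refExp (.sr i) = some i),
            Multiset.map_cons, Multiset.add_cons, ih]

lemma prod_map_r (l : List (ZMod n)) :
    (l.map DihedralGroup.r).prod = DihedralGroup.r l.sum := by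
  induction l with
  | nil => rfl
  | cons a l ih => simp [ih]

end Stmt16Aux

theorem stmt_16 (n : ℕ) (hn : 3 ≤ n) (S : Multiset (DihedralGroup n))
    (hS : Multiset.card S = n + 1) :
    ∃ l : List (DihedralGroup n), l ≠ [] ∧ (l : Multiset (DihedralGroup n)) ≤ S ∧
      l.prod = 1 := by
  haveI : NeZero n := ⟨by omega⟩
  set A := S.filterMap Stmt16Aux.rotExp with hA
  set B := S.filterMap Stmt16Aux.refExp with hB
  have hdec := Stmt16Aux.decomp S
  have hcard : Multiset.card A + Multiset.card B = n + 1 := by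
    have := congrArg Multiset.card hdec
    simpa [hS] using this
  rcases Stmt16Aux.key A B hcard with ⟨A', hle, hne, hsum⟩ | ⟨a, b, A', haB, hbB, hle, hab⟩
  · refine ⟨A'.toList.map DihedralGroup.r, ?_, ?_, ?_⟩
    · simp only [ne_eq, List.map_eq_nil_iff, Multiset.toList_eq_nil]
      exact hne
    · have hcoe : ((A'.toList.map DihedralGroup.r : List _) : Multiset _)
          = A'.map DihedralGroup.r := by
        rw [← Multiset.map_coe, Multiset.coe_toList]
      rw [hcoe, ← hdec]
      exact le_trans (Multiset.map_le_map hle) (Multiset.le_add_right _ _)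
    · rw [Stmt16Aux.prod_map_r, Multiset.sum_toList, hsum]
      rfl
  · refine ⟨DihedralGroup.sr a :: (A'.toList.map DihedralGroup.r ++ [DihedralGroup.sr b]),
      by simp, ?_, ?_⟩
    · have h2 : (a ::ₘ b ::ₘ 0 : Multiset (ZMod n)) ≤ B := by
        rw [← Multiset.cons_erase haB, ← Multiset.cons_erase hbB]
        exact Multiset.cons_le_cons _ (Multiset.cons_le_cons _ (Multiset.zero_le _))
      have hcoe : ((DihedralGroup.sr a ::
            (A'.toList.map DihedralGroup.r ++ [DihedralGroup.sr b]) : List _) : Multiset _)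
          = A'.map DihedralGroup.r
            + Multiset.map DihedralGroup.sr (a ::ₘ b ::ₘ 0) := by
        simp only [← Multiset.cons_coe, ← Multiset.coe_add, Multiset.map_cons,
          Multiset.map_zero]
        rw [← Multiset.map_coe, Multiset.coe_toList]
        simp [Multiset.add_cons]
      rw [hcoe, ← hdec]
      exact add_le_add (Multiset.map_le_map hle) (Multiset.map_le_map h2)
    · rw [List.prod_cons, List.prod_append, Stmt16Aux.prod_map_r, Multiset.sum_toList,
        List.prod_singleton, DihedralGroup.r_mul_sr, DihedralGroup.sr_mul_sr,
        DihedralGroup.one_def]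
      congr 1
      rw [← hab]
      ring
end
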